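/- arXiv:1102.1620 — 3 statements merged into one kernel-verified Lean document; each statement's English description precedes it below -/
import Mathlib

section
/- For ν > 0, λ > 0, w ≥ 0 and t > 0, the convolution identity ∫_0^t u^{ν-1} E_{ν,ν}(-wλ u^ν) E_{ν,1}(-wλ (t-u)^ν) du = (t^ν/ν) E_{ν,ν}(-wλ t^ν) holds. -/
/-!
Expand both Mittag-Leffler series and multiply them as a Cauchy product. By Euler's Beta
integral the `(k, l)` term of the product integrates to
`x ^ (k + l) t ^ (ν (k + l) + β) / Γ(ν (k + l) + β + 1)`, which depends only on `n = k + l`; so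
the `n`-th antidiagonal contributes `n + 1` copies of it, and for `β = ν` the recursion
`Γ(s + 1) = s Γ(s)` turns `(n + 1) / Γ(ν n + ν + 1)` into `1 / (ν Γ(ν n + ν))`.
Integrating termwise is legitimate because the same computation with `|x|` in place of `x`
bounds the integrals of the absolute values by a convergent series; convergence comes from the
ratio test and `Γ(s) / Γ(s + ν) → 0`, a consequence of the log-convexity of `Γ`.
-/

noncomputable def ML (a b x : ℝ) : ℝ := ∑' m : ℕ, x ^ m / Real.Gamma (a * m + b)

open Real MeasureTheory Filter Topology Finset

lemma Gamma_mul_rpow_le_Gamma_add {ν s : ℝ} (hν : 0 < ν) (hν1 : ν < 1) (hs : 1 < s) :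
    Gamma s * (s + ν - 1) ^ ν ≤ Gamma (s + ν) := by
  have h0 : 0 < s + ν - 1 := by linarith
  have hG : 0 < Gamma (s + ν) := Gamma_pos_of_pos (by linarith)
  have hrec : Gamma (s + ν - 1) = Gamma (s + ν) / (s + ν - 1) := by
    rw [eq_div_iff h0.ne', mul_comm, ← Gamma_add_one h0.ne', sub_add_cancel]
  have hconv := Gamma_mul_add_mul_le_rpow_Gamma_mul_rpow_Gamma h0 (by linarith : 0 < s + ν) hν
    (sub_pos.2 hν1) (add_sub_cancel ν 1)
  rw [show ν * (s + ν - 1) + (1 - ν) * (s + ν) = s by ring, hrec,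
    div_rpow hG.le h0.le, div_mul_eq_mul_div, ← rpow_add hG, add_sub_cancel, rpow_one,
    le_div_iff₀ (rpow_pos_of_pos h0 ν)] at hconv
  exact hconv

lemma tendsto_Gamma_div_Gamma_add {ν : ℝ} (hν : 0 < ν) :
    Tendsto (fun s => Gamma s / Gamma (s + ν)) atTop (𝓝 0) := by
  set μ := min ν (1 / 2)
  have hμ : 0 < μ := lt_min hν (by norm_num)
  have hμ1 : μ < 1 := (min_le_right _ _).trans_lt (by norm_num)
  have hbound : ∀ᶠ s in atTop, Gamma s / Gamma (s + ν) ≤ (s + μ - 1) ^ (-μ) := by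
    filter_upwards [eventually_ge_atTop 2] with s hs
    have hGμ : 0 < Gamma (s + μ) := Gamma_pos_of_pos (by linarith)
    have hmono : Gamma (s + μ) ≤ Gamma (s + ν) :=
      Gamma_strictMonoOn_Ici.monotoneOn (by simp; linarith) (by simp; linarith)
        (by simp [μ])
    calc Gamma s / Gamma (s + ν) ≤ Gamma s / Gamma (s + μ) :=
          div_le_div_of_nonneg_left (Gamma_pos_of_pos (by linarith)).le hGμ hmono
      _ ≤ (s + μ - 1) ^ (-μ) := by
          rw [div_le_iff₀ hGμ, rpow_neg (by linarith), ← div_eq_inv_mul,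
            le_div_iff₀ (rpow_pos_of_pos (by linarith) _)]
          exact Gamma_mul_rpow_le_Gamma_add hμ hμ1 (by linarith)
  have hlim : Tendsto (fun s : ℝ => (s + μ - 1) ^ (-μ)) atTop (𝓝 0) :=
    (tendsto_rpow_neg_atTop hμ).comp
      (tendsto_atTop_add_const_right _ _ (tendsto_atTop_add_const_right _ _ tendsto_id))
  refine squeeze_zero' ?_ hbound hlim
  filter_upwards [eventually_gt_atTop 0] with s hs
  exact div_nonneg (Gamma_pos_of_pos hs).le (Gamma_pos_of_pos (by linarith)).le

lemma summable_succ_mul_pow_div_Gamma {ν β r : ℝ} (hν : 0 < ν) (hβ : 0 < β) (hr : 0 ≤ r) :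
    Summable fun n : ℕ => (n + 1) * r ^ n / Gamma (ν * n + β) := by
  have hΓ : ∀ n : ℕ, 0 < Gamma (ν * n + β) := fun n => Gamma_pos_of_pos (by positivity)
  have of_pos : ∀ ρ : ℝ, 0 < ρ → Summable fun n : ℕ => (n + 1) * ρ ^ n / Gamma (ν * n + β) := by
    intro ρ hρ
    have hratio : Tendsto (fun n : ℕ => Gamma (ν * n + β) / Gamma (ν * n + β + ν)) atTop (𝓝 0) :=
      (tendsto_Gamma_div_Gamma_add hν).comp <| tendsto_atTop_add_const_right _ _ <|
        tendsto_natCast_atTop_atTop.const_mul_atTop hν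
    refine summable_of_ratio_test_tendsto_lt_one zero_lt_one
      (Eventually.of_forall fun n => (div_pos (by positivity) (hΓ n)).ne') ?_
    convert (((tendsto_one_div_add_atTop_nhds_zero_nat.const_add 1).mul_const ρ).mul hratio)
      using 2 with n
    · have hΓ' : 0 < Gamma (ν * n + β + ν) := Gamma_pos_of_pos (by positivity)
      rw [Real.norm_of_nonneg (div_pos (by positivity) (hΓ _)).le,
        Real.norm_of_nonneg (div_pos (by positivity) (hΓ _)).le]
      push_cast
      rw [show ν * (n + 1 : ℝ) + β = ν * n + β + ν by ring]
      field_simp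
      ring
    · simp
  refine (of_pos (r + 1) (by linarith)).of_nonneg_of_le (fun n => ?_) fun n => ?_
  · have := hΓ n; positivity
  · have := hΓ n; gcongr; linarith

lemma summable_norm_pow_div_Gamma {ν β : ℝ} (hν : 0 < ν) (hβ : 0 < β) (x : ℝ) :
    Summable fun n : ℕ => ‖x ^ n / Gamma (ν * n + β)‖ := by
  refine (summable_succ_mul_pow_div_Gamma hν hβ (abs_nonneg x)).of_nonneg_of_le
    (fun n => norm_nonneg _) fun n => ?_
  have hΓ : 0 < Gamma (ν * n + β) := Gamma_pos_of_pos (by positivity)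
  rw [norm_div, norm_pow, Real.norm_eq_abs, Real.norm_of_nonneg hΓ.le]
  gcongr
  exact le_mul_of_one_le_left (by positivity) (by simp)

lemma integral_rpow_mul_sub_rpow {p q t : ℝ} (hp : 0 < p) (hq : 0 < q) (ht : 0 < t) :
    ∫ u in 0..t, u ^ (p - 1) * (t - u) ^ (q - 1)
      = t ^ (p + q - 1) * (Gamma p * Gamma q / Gamma (p + q)) := by
  have hbeta : Complex.betaIntegral p q
      = Complex.Gamma p * Complex.Gamma q / Complex.Gamma (p + q) := by
    have hΓ : Complex.Gamma (p + q) ≠ 0 := by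
      rw [← Complex.ofReal_add, Complex.Gamma_ofReal]
      exact_mod_cast (Gamma_pos_of_pos (add_pos hp hq)).ne'
    rw [Complex.Gamma_mul_Gamma_eq_betaIntegral (by simpa using hp) (by simpa using hq),
      mul_div_cancel_left₀ _ hΓ]
  apply Complex.ofReal_injective
  rw [← intervalIntegral.integral_ofReal]
  calc ∫ u in 0..t, ((u ^ (p - 1) * (t - u) ^ (q - 1) : ℝ) : ℂ)
      = ∫ u in 0..t, (u : ℂ) ^ ((p : ℂ) - 1) * ((t : ℂ) - u) ^ ((q : ℂ) - 1) := by
        refine intervalIntegral.integral_congr fun u hu => ?_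
        rw [Set.uIcc_of_le ht.le] at hu
        simp only [Complex.ofReal_mul, Complex.ofReal_cpow hu.1,
          Complex.ofReal_cpow (sub_nonneg.2 hu.2), Complex.ofReal_sub, Complex.ofReal_one]
    _ = (t : ℂ) ^ ((p : ℂ) + q - 1) * Complex.betaIntegral p q :=
        Complex.betaIntegral_scaled _ _ ht
    _ = _ := by
        rw [hbeta, ← Complex.ofReal_add, Complex.Gamma_ofReal, Complex.Gamma_ofReal,
          Complex.Gamma_ofReal]
        push_cast [Complex.ofReal_cpow ht.le]
        rfl

noncomputable def mlConvTerm (ν β x t : ℝ) (k l : ℕ) (u : ℝ) : ℝ :=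
  u ^ (β - 1) * ((x * u ^ ν) ^ k / Gamma (ν * k + β) * ((x * (t - u) ^ ν) ^ l / Gamma (ν * l + 1)))

lemma mlConvTerm_eq {ν β x t u : ℝ} (hu : 0 < u) (hut : u ≤ t) (k l : ℕ) :
    mlConvTerm ν β x t k l u
      = x ^ (k + l) / (Gamma (ν * k + β) * Gamma (ν * l + 1))
        * (u ^ (ν * k + β - 1) * (t - u) ^ (ν * l)) := by
  rw [mlConvTerm, mul_pow, mul_pow, ← rpow_mul_natCast hu.le,
    ← rpow_mul_natCast (sub_nonneg.2 hut), add_sub_assoc, rpow_add hu, pow_add, mul_comm ν k,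
    mul_comm ν l]
  ring

lemma integral_mlConvTerm {ν β t : ℝ} (hν : 0 ≤ ν) (hβ : 0 < β) (ht : 0 < t) (x : ℝ) (k l : ℕ) :
    ∫ u in Set.Ioc 0 t, mlConvTerm ν β x t k l u
      = x ^ (k + l) * t ^ (ν * ↑(k + l) + β) / Gamma (ν * ↑(k + l) + β + 1) := by
  have hbeta := integral_rpow_mul_sub_rpow (p := ν * k + β) (q := ν * l + 1) (by positivity)
    (by positivity) ht
  rw [add_sub_cancel_right, intervalIntegral.integral_of_le ht.le] at hbeta
  have hΓk : 0 < Gamma (ν * k + β) := Gamma_pos_of_pos (by positivity)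
  have hΓl : 0 < Gamma (ν * l + 1) := Gamma_pos_of_pos (by positivity)
  rw [setIntegral_congr_fun measurableSet_Ioc fun u hu => mlConvTerm_eq hu.1 hu.2 k l,
    integral_const_mul, hbeta]
  push_cast
  rw [show ν * k + β + (ν * l + 1) - 1 = ν * (k + l) + β by ring,
    show ν * k + β + (ν * l + 1) = ν * (k + l) + β + 1 by ring]
  field_simp

lemma integrableOn_mlConvTerm {ν β : ℝ} (hν : 0 ≤ ν) (hβ : 0 < β) (x t : ℝ) (k l : ℕ) :
    IntegrableOn (mlConvTerm ν β x t k l) (Set.Ioc 0 t) := by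
  have hc : Continuous fun u : ℝ => u ^ ν := continuous_rpow_const hν
  refine ((intervalIntegral.intervalIntegrable_rpow' (by linarith : -1 < β - 1)).mul_continuousOn
    (Continuous.continuousOn ?_)).1
  fun_prop

lemma norm_mlConvTerm {ν β x t u : ℝ} (hν : 0 ≤ ν) (hβ : 0 < β) (hu : 0 ≤ u) (hut : u ≤ t)
    (k l : ℕ) : ‖mlConvTerm ν β x t k l u‖ = mlConvTerm ν β |x| t k l u := by
  have hΓk : 0 < Gamma (ν * k + β) := Gamma_pos_of_pos (by positivity)
  have hΓl : 0 < Gamma (ν * l + 1) := Gamma_pos_of_pos (by positivity)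
  simp only [mlConvTerm, norm_mul, norm_div, norm_pow, Real.norm_eq_abs, abs_of_pos hΓk,
    abs_of_pos hΓl, abs_of_nonneg (rpow_nonneg hu _),
    abs_of_nonneg (rpow_nonneg (sub_nonneg.2 hut) _)]

lemma integrableOn_sum_mlConvTerm {ν β : ℝ} (hν : 0 ≤ ν) (hβ : 0 < β) (x t : ℝ) (n : ℕ) :
    IntegrableOn (fun u => ∑ kl ∈ antidiagonal n, mlConvTerm ν β x t kl.1 kl.2 u) (Set.Ioc 0 t) :=
  integrable_finsetSum (μ := volume.restrict (Set.Ioc 0 t)) _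
    fun kl _ => integrableOn_mlConvTerm hν hβ x t kl.1 kl.2

lemma integral_sum_mlConvTerm {ν β t : ℝ} (hν : 0 ≤ ν) (hβ : 0 < β) (ht : 0 < t) (x : ℝ) (n : ℕ) :
    ∫ u in Set.Ioc 0 t, ∑ kl ∈ antidiagonal n, mlConvTerm ν β x t kl.1 kl.2 u
      = (n + 1) * (x ^ n * t ^ (ν * n + β) / Gamma (ν * n + β + 1)) := by
  rw [integral_finsetSum (μ := volume.restrict (Set.Ioc 0 t))
      (f := fun kl => mlConvTerm ν β x t kl.1 kl.2) (antidiagonal n)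
      fun kl _ => integrableOn_mlConvTerm hν hβ x t kl.1 kl.2,
    Finset.sum_congr rfl fun kl hkl =>
      (mem_antidiagonal.1 hkl) ▸ integral_mlConvTerm hν hβ ht x kl.1 kl.2,
    sum_const, Nat.card_antidiagonal, nsmul_eq_mul]
  push_cast
  rfl

lemma summable_integral_norm_sum_mlConvTerm {ν β t : ℝ} (hν : 0 < ν) (hβ : 0 < β) (ht : 0 < t)
    (x : ℝ) :
    Summable fun n : ℕ =>
      ∫ u in Set.Ioc 0 t, ‖∑ kl ∈ antidiagonal n, mlConvTerm ν β x t kl.1 kl.2 u‖ := by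
  have hmajorant : Summable fun n : ℕ =>
      (n + 1) * (|x| ^ n * t ^ (ν * n + β) / Gamma (ν * n + β + 1)) := by
    refine ((summable_succ_mul_pow_div_Gamma hν (by linarith : 0 < β + 1)
      (by positivity : 0 ≤ |x| * t ^ ν)).mul_left (t ^ β)).congr fun n => ?_
    rw [mul_pow, ← rpow_mul_natCast ht.le, rpow_add ht, mul_comm ν n, add_assoc]
    ring
  refine hmajorant.of_nonneg_of_le (fun n => integral_nonneg fun u => norm_nonneg _) fun n => ?_
  rw [← integral_sum_mlConvTerm hν.le hβ ht]
  refine setIntegral_mono_on (integrableOn_sum_mlConvTerm hν.le hβ x t n).norm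
    (integrableOn_sum_mlConvTerm hν.le hβ |x| t n) measurableSet_Ioc
    fun u hu => (norm_sum_le _ _).trans_eq ?_
  exact Finset.sum_congr rfl fun kl _ => norm_mlConvTerm hν.le hβ hu.1.le hu.2 kl.1 kl.2

lemma rpow_mul_ML_mul_ML_eq_tsum {ν β : ℝ} (hν : 0 < ν) (hβ : 0 < β) (x t u : ℝ) :
    u ^ (β - 1) * ML ν β (x * u ^ ν) * ML ν 1 (x * (t - u) ^ ν)
      = ∑' n : ℕ, ∑ kl ∈ antidiagonal n, mlConvTerm ν β x t kl.1 kl.2 u := by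
  rw [ML, ML, mul_assoc, tsum_mul_tsum_eq_tsum_sum_antidiagonal_of_summable_norm
    (summable_norm_pow_div_Gamma hν hβ _) (summable_norm_pow_div_Gamma hν one_pos _),
    ← tsum_mul_left]
  simp_rw [mul_sum]
  rfl

theorem integral_rpow_mul_ML_mul_ML {ν β t : ℝ} (hν : 0 < ν) (hβ : 0 < β) (ht : 0 < t) (x : ℝ) :
    ∫ u in 0..t, u ^ (β - 1) * ML ν β (x * u ^ ν) * ML ν 1 (x * (t - u) ^ ν)
      = ∑' n : ℕ, (n + 1) * (x ^ n * t ^ (ν * n + β) / Gamma (ν * n + β + 1)) := by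
  simp_rw [intervalIntegral.integral_of_le ht.le, rpow_mul_ML_mul_ML_eq_tsum hν hβ x t,
    ← integral_tsum_of_summable_integral_norm
      (integrableOn_sum_mlConvTerm hν.le hβ x t)
      (summable_integral_norm_sum_mlConvTerm hν hβ ht x),
    integral_sum_mlConvTerm hν.le hβ ht]

lemma succ_mul_pow_mul_rpow_div_Gamma {ν t : ℝ} (hν : 0 < ν) (ht : 0 < t) (x : ℝ) (n : ℕ) :
    (n + 1) * (x ^ n * t ^ (ν * n + ν) / Gamma (ν * n + ν + 1))
      = t ^ ν / ν * ((x * t ^ ν) ^ n / Gamma (ν * n + ν)) := by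
  have hpos : 0 < ν * n + ν := by positivity
  have hΓ : 0 < Gamma (ν * n + ν) := Gamma_pos_of_pos hpos
  rw [Gamma_add_one hpos.ne', rpow_add ht, mul_pow, ← rpow_mul_natCast ht.le, mul_comm ν n]
  field_simp

theorem stmt1_general (ν lam w t : ℝ) (hν : 0 < ν) (ht : 0 < t) :
    ∫ u in (0:ℝ)..t, u ^ (ν - 1) * ML ν ν (-(w * lam) * u ^ ν) * ML ν 1 (-(w * lam) * (t - u) ^ ν)
      = (t ^ ν / ν) * ML ν ν (-(w * lam) * t ^ ν) := by
  rw [integral_rpow_mul_ML_mul_ML hν hν ht, ML, ← tsum_mul_left]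
  exact tsum_congr (succ_mul_pow_mul_rpow_div_Gamma hν ht _)

theorem stmt1 (ν lam w t : ℝ) (hν : 0 < ν) (hlam : 0 < lam) (hw : 0 ≤ w) (ht : 0 < t) :
    ∫ u in (0:ℝ)..t, u ^ (ν - 1) * ML ν ν (-(w * lam) * u ^ ν) * ML ν 1 (-(w * lam) * (t - u) ^ ν)
      = (t ^ ν / ν) * ML ν ν (-(w * lam) * t ^ ν) :=
  stmt1_general ν lam w t hν ht
end

section
/- For λ > 0, ν ∈ (0,1], t > 0, the two expressions for the extinction probability agree: (λ t^ν / ν) ∫_0^∞ e^{-w} E_{ν,ν}(-wλt^ν) dw = 1 - ∫_0^∞ e^{-w} E_{ν,1}(-λ t^ν w) dw. -/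
/-!
Integration by parts against `e^{-w}` reduces the identity to two facts about
`u(w) = E_{ν,1}(-c w)`, `c = λ t^ν`: its derivative is `-(c/ν) E_{ν,ν}(-c w)`, and it is
nonincreasing with values in `[0, 1]` on `w ≥ 0`. The latter makes the derivative integrable on
`(0, ∞)` and kills the boundary term at infinity.

Monotonicity and the bounds come from an approximation. With `ψ_0(z) = e^{-z}` and
`ψ_{k+1}(z) = ν ψ_k(z) + (1 - ν) ∫₀¹ (k+1) s^k ψ_k(z s) ds`, every `ψ_k` is nonincreasing with
values in `[0, 1]` on `z ≥ 0`, since this averaging preserves both properties. In coefficients,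
`ψ_k(z) = ∑ (-z)^m / m! · (νm+1)_k / (m+1)_k`, and by Gauss's product for `Γ`,
`n^{(1-ν)m} (νm+1)_{n+1} / (m+1)_{n+1}` increases to `m! / Γ(νm+1)`. Hence
`ψ_{n+1}(n^{1-ν} y) → E_{ν,1}(-y)` by dominated convergence, and the properties pass to the limit.
-/

open Filter MeasureTheory Set Topology Real

lemma integrableOn_Ioi_deriv_of_antitoneOn {u u' : ℝ → ℝ} {a m : ℝ}
    (hderiv : ∀ x ∈ Ici a, HasDerivAt u (u' x) x) (hanti : AntitoneOn u (Ici a))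
    (hm : ∀ x ∈ Ici a, m ≤ u x) : IntegrableOn u' (Ioi a) := by
  have hnonpos : ∀ x ∈ Ioi a, u' x ≤ 0 := fun x hx ↦
    (hderiv x (mem_Ici.2 (le_of_lt hx))).hasDerivWithinAt.nonpos_of_antitoneOn
      (((PerfectSpace.univ_preperfect x (mem_univ x)).nhds_inter
        (Ici_mem_nhds hx)).mono (by simp)) hanti
  set v : ℝ → ℝ := fun x ↦ u (max x a)
  have hv_anti : Antitone v := fun x y hxy ↦
    hanti (le_max_right x a) (le_max_right y a) (max_le_max hxy le_rfl)
  have hv_bdd : BddBelow (range v) := ⟨m, by rintro _ ⟨x, rfl⟩; exact hm _ (le_max_right x a)⟩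
  have hlim : Tendsto u atTop (𝓝 (⨅ x, v x)) :=
    (tendsto_atTop_ciInf hv_anti hv_bdd).congr' <| by
      filter_upwards [eventually_ge_atTop a] with x hx
      simp only [v, max_eq_left hx]
  exact integrableOn_Ioi_deriv_of_nonpos' hderiv hnonpos hlim

lemma integral_exp_neg_mul_deriv_of_antitoneOn {u u' : ℝ → ℝ} {m : ℝ}
    (hderiv : ∀ x ∈ Ici 0, HasDerivAt u (u' x) x) (hanti : AntitoneOn u (Ici 0))
    (hm : ∀ x ∈ Ici 0, m ≤ u x) :
    ∫ x in Ioi 0, exp (-x) * u' x = (∫ x in Ioi 0, exp (-x) * u x) - u 0 := by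
  set C := |m| + |u 0|
  have hbound : ∀ x ∈ Ici (0:ℝ), ‖u x‖ ≤ C := fun x hx ↦ by
    have hle := hanti self_mem_Ici hx hx
    exact abs_le.2 ⟨by linarith [hm x hx, neg_abs_le m, abs_nonneg (u 0)],
      by linarith [le_abs_self (u 0), abs_nonneg m]⟩
  have hexp : IntegrableOn (fun x ↦ exp (-x)) (Ioi 0) := by
    simpa using exp_neg_integrableOn_Ioi 0 one_pos
  have hu_cont : ContinuousOn u (Ici 0) := fun x hx ↦
    (hderiv x hx).continuousAt.continuousWithinAt
  have hmeas : AEStronglyMeasurable u (volume.restrict (Ioi 0)) :=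
    (hu_cont.mono Ioi_subset_Ici_self).aestronglyMeasurable measurableSet_Ioi
  have hEu : IntegrableOn (fun x ↦ exp (-x) * u x) (Ioi 0) :=
    hexp.mul_bdd hmeas ((ae_restrict_iff' measurableSet_Ioi).2 <|
      ae_of_all _ fun x hx ↦ hbound x (mem_Ici.2 (le_of_lt hx)))
  have hEu' : IntegrableOn (fun x ↦ exp (-x) * u' x) (Ioi 0) :=
    (integrableOn_Ioi_deriv_of_antitoneOn hderiv hanti hm).bdd_mul
      (continuous_exp.comp continuous_neg).aestronglyMeasurable
      ((ae_restrict_iff' measurableSet_Ioi).2 <| ae_of_all _ fun x hx ↦ by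
        rw [Real.norm_of_nonneg (exp_pos _).le, exp_le_one_iff]
        exact neg_nonpos.2 (le_of_lt hx))
  have hprod_deriv : ∀ x ∈ Ici (0:ℝ), HasDerivAt (fun x ↦ exp (-x) * u x)
      (exp (-x) * u' x - exp (-x) * u x) x := fun x hx ↦
    ((hasDerivAt_neg x).exp.mul (hderiv x hx)).congr_deriv (by ring)
  have hprod_lim : Tendsto (fun x ↦ exp (-x) * u x) atTop (𝓝 0) := by
    refine squeeze_zero_norm' ?_ (tendsto_exp_neg_atTop_nhds_zero.mul_const C |>.trans (by simp))
    filter_upwards [eventually_ge_atTop 0] with x hx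
    rw [norm_mul, Real.norm_of_nonneg (exp_pos _).le]
    exact mul_le_mul_of_nonneg_left (hbound x hx) (exp_pos _).le
  have hFTC := integral_Ioi_of_hasDerivAt_of_tendsto' hprod_deriv (hEu'.sub hEu) hprod_lim
  rw [integral_sub hEu' hEu] at hFTC
  simp only [neg_zero, exp_zero, one_mul] at hFTC
  linear_combination hFTC

section MittagLeffler

variable {ν : ℝ}

lemma Gamma_add_one_le_Gamma_add_mul_rpow (hν0 : 0 < ν) (hν1 : ν ≤ 1) {x : ℝ} (hx : 0 < x) :
    Gamma (x + 1) ≤ Gamma (x + ν) * (x + ν) ^ (1 - ν) := by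
  rcases hν1.lt_or_eq with hν1 | rfl
  · have hxν : 0 < x + ν := by linarith
    have hΓ := Gamma_mul_add_mul_le_rpow_Gamma_mul_rpow_Gamma hxν (by linarith : 0 < x + ν + 1)
      hν0 (sub_pos.2 hν1) (by ring)
    rw [show ν * (x + ν) + (1 - ν) * (x + ν + 1) = x + 1 by ring, Gamma_add_one hxν.ne',
      mul_rpow hxν.le (Gamma_pos_of_pos hxν).le, mul_left_comm, ← rpow_add (Gamma_pos_of_pos hxν),
      add_sub_cancel, rpow_one] at hΓ
    linarith
  · simp

lemma summable_pow_div_Gamma_mul_add (hν0 : 0 < ν) (hν1 : ν ≤ 1) {b r : ℝ} (hb : 0 < b)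
    (hr : 0 ≤ r) : Summable fun m : ℕ ↦ r ^ m / Gamma (ν * m + b) := by
  refine summable_of_ratio_norm_eventually_le (r := 1 / 2) (by norm_num) ?_
  have hlin : Tendsto (fun m : ℕ ↦ ν * m + b) atTop atTop :=
    tendsto_atTop_add_const_right _ b (tendsto_natCast_atTop_atTop.const_mul_atTop hν0)
  have hpow : Tendsto (fun m : ℕ ↦ (ν * m + b + ν) ^ ν) atTop atTop :=
    (tendsto_rpow_atTop hν0).comp (tendsto_atTop_add_const_right _ ν hlin)
  filter_upwards [hlin.eventually_ge_atTop ν, hpow.eventually_ge_atTop (4 * r)] with m hνx hx4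
  set x := ν * m + b
  have hx : 0 < x := by positivity
  have hxν : 0 < x + ν := by linarith
  have hsucc : ν * ((m + 1 : ℕ) : ℝ) + b = x + ν := by push_cast; ring
  -- `r (x + ν)^(1-ν) = r (x + ν) / (x + ν)^ν ≤ 2x / 4`, using `x + ν ≤ 2x`
  have hsmall : 2 * r * (x + ν) ^ (1 - ν) ≤ x := by
    have hsplit : (x + ν) ^ (1 - ν) * (x + ν) ^ ν = x + ν := by
      rw [← rpow_add hxν]; norm_num
    nlinarith [mul_le_mul_of_nonneg_left hx4 (rpow_nonneg hxν.le (1 - ν)),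
      rpow_nonneg hxν.le (1 - ν)]
  have hΓ : x * Gamma x ≤ Gamma (x + ν) * (x + ν) ^ (1 - ν) := by
    simpa [Gamma_add_one hx.ne'] using Gamma_add_one_le_Gamma_add_mul_rpow hν0 hν1 hx
  have hΓx := Gamma_pos_of_pos hx
  have hΓxν := Gamma_pos_of_pos hxν
  have hratio : 2 * r * Gamma x ≤ Gamma (x + ν) := by
    nlinarith [mul_le_mul_of_nonneg_left hΓ (by positivity : (0:ℝ) ≤ 2 * r),
      mul_le_mul_of_nonneg_left hsmall hΓxν.le, rpow_nonneg hxν.le (1 - ν)]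
  rw [hsucc, norm_of_nonneg (by positivity), norm_of_nonneg (by positivity),
    div_le_iff₀ hΓxν, pow_succ]
  calc r ^ m * r = 1 / 2 * (r ^ m / Gamma x) * (2 * r * Gamma x) := by field_simp
    _ ≤ 1 / 2 * (r ^ m / Gamma x) * Gamma (x + ν) := by gcongr

lemma hasDerivAt_ML_one (hν0 : 0 < ν) (hν1 : ν ≤ 1) (x : ℝ) :
    HasDerivAt (ML ν 1) (ML ν ν x / ν) x := by
  set R := |x| + 1
  have hterm : ∀ (m : ℕ) (y : ℝ), HasDerivAt (fun z ↦ z ^ (m + 1) / Gamma (ν * (m + 1 : ℕ) + 1))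
      (y ^ m / Gamma (ν * m + ν) / ν) y := fun m y ↦ by
    have hpos : 0 < ν * m + ν := by positivity
    refine ((hasDerivAt_pow (m + 1) y).div_const _).congr_deriv ?_
    rw [show ν * ((m + 1 : ℕ) : ℝ) + 1 = (ν * m + ν) + 1 by push_cast; ring,
      Gamma_add_one hpos.ne']
    have := (Gamma_pos_of_pos hpos).ne'
    field_simp
    push_cast
    ring
  have hseries := hasDerivAt_tsum_of_isPreconnected
    ((summable_pow_div_Gamma_mul_add hν0 hν1 hν0 (by positivity : 0 ≤ R)).div_const ν)
    Metric.isOpen_ball (convex_ball 0 R).isPreconnected (fun m y _ ↦ hterm m y)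
    (fun m y hy ↦ by
      have hyR : |y| ≤ R := by simpa using (Metric.mem_ball.1 hy).le
      rw [norm_div, norm_div, norm_pow, norm_of_nonneg (Gamma_pos_of_pos (by positivity)).le,
        norm_of_nonneg hν0.le]
      gcongr
      simpa using hyR)
    (Metric.mem_ball_self (by positivity)) (by simp [summable_zero])
    (by simp [R] : x ∈ Metric.ball 0 R)
  have hML : ML ν 1 = fun z ↦ 1 + ∑' m : ℕ, z ^ (m + 1) / Gamma (ν * (m + 1 : ℕ) + 1) := by
    funext z
    have hsum : Summable fun m : ℕ ↦ z ^ m / Gamma (ν * m + 1) :=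
      (summable_pow_div_Gamma_mul_add hν0 hν1 one_pos (abs_nonneg z)).of_norm_bounded fun m ↦ by
        rw [norm_div, norm_pow, norm_of_nonneg (Gamma_pos_of_pos (by positivity)).le,
          Real.norm_eq_abs]
    rw [ML, hsum.tsum_eq_zero_add]
    simp
  rw [hML, ML, ← tsum_div_const]
  exact hseries.const_add 1

lemma ML_zero (a b : ℝ) : ML a b 0 = (Gamma b)⁻¹ := by
  rw [ML, tsum_eq_single 0 fun m hm ↦ by rw [zero_pow hm, zero_div]]
  simp

lemma summable_pow_div_factorial_mul {c : ℕ → ℝ} {C : ℝ} (hc : ∀ m, |c m| ≤ C) (z : ℝ) :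
    Summable fun m : ℕ ↦ z ^ m / m.factorial * c m :=
  ((summable_pow_div_factorial |z|).mul_right C).of_norm_bounded fun m ↦ by
    rw [norm_mul, norm_div, norm_pow, Real.norm_natCast, Real.norm_eq_abs, Real.norm_eq_abs]
    gcongr
    exact hc m

lemma continuous_tsum_pow_div_factorial_mul {c : ℕ → ℝ} {C : ℝ} (hc : ∀ m, |c m| ≤ C) :
    Continuous fun z ↦ ∑' m : ℕ, z ^ m / m.factorial * c m := by
  refine continuous_iff_continuousAt.2 fun x ↦ ?_
  set R := |x| + 1
  have hon : ContinuousOn (fun z ↦ ∑' m : ℕ, z ^ m / m.factorial * c m) (Icc (-R) R) :=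
    continuousOn_tsum (fun m ↦ by fun_prop) ((summable_pow_div_factorial R).mul_right C)
      fun m z hz ↦ by
        rw [norm_mul, norm_div, norm_pow, Real.norm_natCast, Real.norm_eq_abs, Real.norm_eq_abs]
        exact mul_le_mul (by gcongr; exact abs_le.2 hz) (hc m) (abs_nonneg _) (by positivity)
  exact hon.continuousAt (Icc_mem_nhds (by linarith [neg_abs_le x]) (by linarith [le_abs_self x]))

/-- `risingRatio ν k m = (ν m + 1)_k / (m + 1)_k`, a ratio of rising factorials. -/
noncomputable def risingRatio (ν : ℝ) (k m : ℕ) : ℝ :=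
  ∏ j ∈ Finset.range k, ((j : ℝ) + 1 + ν * m) / (j + 1 + m)

lemma risingRatio_succ (ν : ℝ) (k m : ℕ) :
    risingRatio ν (k + 1) m = risingRatio ν k m * ((k + 1 + ν * m) / (k + 1 + m)) :=
  Finset.prod_range_succ _ k

lemma risingRatio_nonneg (hν0 : 0 ≤ ν) (k m : ℕ) : 0 ≤ risingRatio ν k m :=
  Finset.prod_nonneg fun j _ ↦ by positivity

lemma risingRatio_le_one (hν0 : 0 ≤ ν) (hν1 : ν ≤ 1) (k m : ℕ) : risingRatio ν k m ≤ 1 :=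
  Finset.prod_le_one (fun j _ ↦ by positivity) fun j _ ↦ by
    rw [div_le_one (by positivity)]
    nlinarith [(m.cast_nonneg : (0:ℝ) ≤ m)]

lemma abs_risingRatio_le_one (hν0 : 0 ≤ ν) (hν1 : ν ≤ 1) (k m : ℕ) : |risingRatio ν k m| ≤ 1 := by
  rw [abs_of_nonneg (risingRatio_nonneg hν0 k m)]
  exact risingRatio_le_one hν0 hν1 k m

noncomputable def mlApprox (ν : ℝ) (k : ℕ) (z : ℝ) : ℝ :=
  ∑' m : ℕ, (-z) ^ m / m.factorial * risingRatio ν k m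

lemma mlApprox_zero (ν z : ℝ) : mlApprox ν 0 z = exp (-z) := by
  simp only [mlApprox, risingRatio, Finset.range_zero, Finset.prod_empty, mul_one]
  rw [exp_eq_exp_ℝ, (NormedSpace.expSeries_div_hasSum_exp (-z)).tsum_eq]

lemma continuous_mlApprox (hν0 : 0 ≤ ν) (hν1 : ν ≤ 1) (k : ℕ) : Continuous (mlApprox ν k) :=
  (continuous_tsum_pow_div_factorial_mul (abs_risingRatio_le_one hν0 hν1 k)).comp continuous_neg

noncomputable def powerAverage (k : ℕ) (f : ℝ → ℝ) (z : ℝ) : ℝ :=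
  ∫ s in (0:ℝ)..1, ((k : ℝ) + 1) * s ^ k * f (z * s)

lemma integral_succ_mul_pow_mul_pow (k m : ℕ) :
    ∫ s in (0:ℝ)..1, ((k : ℝ) + 1) * s ^ k * s ^ m = (k + 1) / (k + 1 + m) := by
  simp_rw [mul_assoc, ← pow_add]
  rw [intervalIntegral.integral_const_mul, integral_pow]
  push_cast
  field_simp
  ring

lemma integral_succ_mul_pow (k : ℕ) : ∫ s in (0:ℝ)..1, ((k : ℝ) + 1) * s ^ k = 1 := by
  have h := integral_succ_mul_pow_mul_pow k 0
  simp only [pow_zero, mul_one, CharP.cast_eq_zero, add_zero] at h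
  rw [h, div_self (by positivity)]

lemma mapsTo_powerAverage {f : ℝ → ℝ} (hf : Continuous f) (h01 : MapsTo f (Ici 0) (Icc 0 1))
    (k : ℕ) : MapsTo (powerAverage k f) (Ici 0) (Icc 0 1) := fun z hz ↦ by
  have hval : ∀ s ∈ Icc (0:ℝ) 1, f (z * s) ∈ Icc 0 1 := fun s hs ↦
    h01 (mul_nonneg (mem_Ici.1 hz) hs.1)
  refine ⟨intervalIntegral.integral_nonneg zero_le_one fun s hs ↦
    mul_nonneg (mul_nonneg (by positivity) (pow_nonneg hs.1 k)) (hval s hs).1, ?_⟩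
  rw [← integral_succ_mul_pow k]
  refine intervalIntegral.integral_mono_on zero_le_one (Continuous.intervalIntegrable
    (by fun_prop) _ _) (Continuous.intervalIntegrable (by fun_prop) _ _) fun s hs ↦ ?_
  exact mul_le_of_le_one_right (mul_nonneg (by positivity) (pow_nonneg hs.1 k)) (hval s hs).2

lemma antitoneOn_powerAverage {f : ℝ → ℝ} (hf : Continuous f) (hanti : AntitoneOn f (Ici 0))
    (k : ℕ) : AntitoneOn (powerAverage k f) (Ici 0) := fun z hz z' hz' hzz' ↦ by
  refine intervalIntegral.integral_mono_on zero_le_one (Continuous.intervalIntegrable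
    (by fun_prop) _ _) (Continuous.intervalIntegrable (by fun_prop) _ _) fun s hs ↦ ?_
  have := hs.1
  gcongr
  exact hanti (mul_nonneg (mem_Ici.1 hz) hs.1) (mul_nonneg (mem_Ici.1 hz') hs.1)
    (mul_le_mul_of_nonneg_right hzz' hs.1)

lemma hasSum_powerAverage_mlApprox (hν0 : 0 ≤ ν) (hν1 : ν ≤ 1) (k : ℕ) (z : ℝ) :
    HasSum (fun m : ℕ ↦ (-z) ^ m / m.factorial * risingRatio ν k m * ((k + 1) / (k + 1 + m)))
      (powerAverage k (mlApprox ν k) z) := by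
  have hR := abs_risingRatio_le_one hν0 hν1 k
  have hmoment : ∀ m : ℕ, ∫ s in (0:ℝ)..1,
      ((k : ℝ) + 1) * s ^ k * ((-(z * s)) ^ m / m.factorial * risingRatio ν k m)
        = (-z) ^ m / m.factorial * risingRatio ν k m * ((k + 1) / (k + 1 + m)) := fun m ↦ by
    rw [← integral_succ_mul_pow_mul_pow, ← intervalIntegral.integral_const_mul]
    congr 1 with s
    ring
  simp_rw [← hmoment]
  refine intervalIntegral.hasSum_integral_of_dominated_convergence
    (fun m _ ↦ ((k : ℝ) + 1) * (|z| ^ m / m.factorial)) (fun m ↦ by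
      apply Continuous.aestronglyMeasurable; fun_prop) (fun m ↦ ae_of_all _ fun s hs ↦ ?_)
    (ae_of_all _ fun s _ ↦ (summable_pow_div_factorial |z|).mul_left _)
    intervalIntegrable_const (ae_of_all _ fun s _ ↦ ?_)
  · rw [uIoc_of_le zero_le_one] at hs
    rw [norm_mul, norm_mul, norm_mul, norm_div, norm_pow, norm_pow, Real.norm_natCast,
      Real.norm_eq_abs, Real.norm_eq_abs, Real.norm_eq_abs, abs_of_nonneg hs.1.le,
      abs_of_nonneg (by positivity : (0:ℝ) ≤ k + 1)]
    have hzs : |(-(z * s))| ≤ |z| := by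
      rw [abs_neg, abs_mul, abs_of_nonneg hs.1.le]
      exact mul_le_of_le_one_right (abs_nonneg z) hs.2
    have := pow_le_one₀ hs.1.le hs.2 (n := k)
    calc (k + 1) * s ^ k * (|(-(z * s))| ^ m / m.factorial * |risingRatio ν k m|)
        ≤ (k + 1) * 1 * (|z| ^ m / m.factorial * 1) := by gcongr; exact hR m
      _ = (k + 1) * (|z| ^ m / m.factorial) := by ring
  · exact (summable_pow_div_factorial_mul hR (-(z * s))).hasSum.mul_left _

-- termwise, `(k + 1 + ν m) / (k + 1 + m) = ν + (1 - ν) (k + 1) / (k + 1 + m)`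
lemma mlApprox_succ (hν0 : 0 ≤ ν) (hν1 : ν ≤ 1) (k : ℕ) (z : ℝ) :
    mlApprox ν (k + 1) z = ν * mlApprox ν k z + (1 - ν) * powerAverage k (mlApprox ν k) z := by
  have hA : HasSum (fun m : ℕ ↦ (-z) ^ m / m.factorial * risingRatio ν k m) (mlApprox ν k z) :=
    (summable_pow_div_factorial_mul (abs_risingRatio_le_one hν0 hν1 k) (-z)).hasSum
  have hB := hasSum_powerAverage_mlApprox hν0 hν1 k z
  rw [← ((hA.mul_left ν).add (hB.mul_left (1 - ν))).tsum_eq, mlApprox]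
  refine tsum_congr fun m ↦ ?_
  rw [risingRatio_succ]
  field_simp
  ring

lemma mapsTo_mlApprox_and_antitoneOn (hν0 : 0 ≤ ν) (hν1 : ν ≤ 1) (k : ℕ) :
    MapsTo (mlApprox ν k) (Ici 0) (Icc 0 1) ∧ AntitoneOn (mlApprox ν k) (Ici 0) := by
  induction k with
  | zero =>
    simp only [funext (mlApprox_zero ν)]
    exact ⟨fun z hz ↦ ⟨(exp_pos _).le, exp_le_one_iff.2 (neg_nonpos.2 hz)⟩,
      fun z _ z' _ h ↦ exp_le_exp.2 (neg_le_neg h)⟩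
  | succ k ih =>
    obtain ⟨h01, hanti⟩ := ih
    have hcont := continuous_mlApprox hν0 hν1 k
    have havg01 := mapsTo_powerAverage hcont h01 k
    have havganti := antitoneOn_powerAverage hcont hanti k
    simp only [funext (mlApprox_succ hν0 hν1 k)]
    refine ⟨fun z hz ↦ ?_, fun z hz z' hz' h ↦ ?_⟩
    · simpa only [smul_eq_mul] using
        convex_Icc (0:ℝ) 1 (h01 hz) (havg01 hz) hν0 (sub_nonneg.2 hν1) (by ring)
    · exact add_le_add (mul_le_mul_of_nonneg_left (hanti hz hz' h) hν0)
        (mul_le_mul_of_nonneg_left (havganti hz hz' h) (sub_nonneg.2 hν1))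

lemma one_add_div_add_one_le_rpow {x p : ℝ} (hx : 0 < x) (hp : 0 ≤ p) :
    1 + p / (x + 1) ≤ ((x + 1) / x) ^ p := by
  have hlog : 1 / (x + 1) ≤ log ((x + 1) / x) := by
    have := one_sub_inv_le_log_of_pos (by positivity : 0 < (x + 1) / x)
    rwa [inv_div, one_sub_div (by positivity), add_sub_cancel_left] at this
  calc 1 + p / (x + 1) ≤ p * log ((x + 1) / x) + 1 := by
        rw [div_eq_mul_one_div p]; nlinarith [mul_le_mul_of_nonneg_left hlog hp]
    _ ≤ ((x + 1) / x) ^ p := by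
        rw [rpow_def_of_pos (by positivity), mul_comm]; exact add_one_le_exp _

lemma rpow_mul_risingRatio_le_succ (hν0 : 0 ≤ ν) (hν1 : ν ≤ 1) (m : ℕ) {n : ℕ} (hn : 0 < n) :
    (n : ℝ) ^ ((1 - ν) * m) * risingRatio ν (n + 1) m
      ≤ ((n + 1 : ℕ) : ℝ) ^ ((1 - ν) * m) * risingRatio ν (n + 1 + 1) m := by
  set p := (1 - ν) * m
  have hp : 0 ≤ p := mul_nonneg (sub_nonneg.2 hν1) m.cast_nonneg
  have hn' : (0:ℝ) < n := Nat.cast_pos.2 hn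
  have hq : 1 ≤ (1 + p / (n + 1)) * ((n + 1 + 1 + ν * m) / (n + 1 + 1 + m)) := by
    rw [← mul_div_assoc, one_le_div (by positivity), add_mul, one_mul, div_mul_eq_mul_div,
      ← sub_le_iff_le_add', le_div_iff₀ (by positivity)]
    have : (n : ℝ) + 1 ≤ n + 1 + 1 + ν * m := by nlinarith [m.cast_nonneg (α := ℝ)]
    nlinarith [mul_le_mul_of_nonneg_left this hp]
  have hgrowth : (n : ℝ) ^ p ≤ ((n : ℝ) + 1) ^ p * ((n + 1 + 1 + ν * m) / (n + 1 + 1 + m)) := by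
    have hsplit : ((n : ℝ) + 1) ^ p = (n : ℝ) ^ p * (((n : ℝ) + 1) / n) ^ p := by
      rw [← mul_rpow hn'.le (by positivity), mul_div_cancel₀ _ hn'.ne']
    rw [hsplit, mul_assoc]
    refine le_mul_of_one_le_right (by positivity) (hq.trans ?_)
    gcongr
    exact one_add_div_add_one_le_rpow hn' hp
  calc (n : ℝ) ^ p * risingRatio ν (n + 1) m
      ≤ ((n : ℝ) + 1) ^ p * ((n + 1 + 1 + ν * m) / (n + 1 + 1 + m)) * risingRatio ν (n + 1) m :=
        mul_le_mul_of_nonneg_right hgrowth (risingRatio_nonneg hν0 _ _)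
    _ = ((n + 1 : ℕ) : ℝ) ^ p * risingRatio ν (n + 1 + 1) m := by
        rw [risingRatio_succ ν (n + 1) m]; push_cast; ring

lemma GammaSeq_div_GammaSeq_eq (hν0 : 0 ≤ ν) (m : ℕ) {n : ℕ} (hn : 0 < n) :
    GammaSeq (m + 1) n / GammaSeq (ν * m + 1) n
      = (n : ℝ) ^ ((1 - ν) * m) * risingRatio ν (n + 1) m := by
  have hn' : (0:ℝ) < n := Nat.cast_pos.2 hn
  have hsplit : (n : ℝ) ^ ((m : ℝ) + 1) = (n : ℝ) ^ ((1 - ν) * m) * (n : ℝ) ^ (ν * m + 1) := by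
    rw [← rpow_add hn']; ring_nf
  have hprod : risingRatio ν (n + 1) m = (∏ j ∈ Finset.range (n + 1), (ν * m + 1 + j))
      / ∏ j ∈ Finset.range (n + 1), ((m : ℝ) + 1 + j) := by
    rw [risingRatio, ← Finset.prod_div_distrib]
    exact Finset.prod_congr rfl fun j _ ↦ by ring_nf
  have hden : (∏ j ∈ Finset.range (n + 1), (ν * m + 1 + (j : ℝ))) ≠ 0 :=
    Finset.prod_ne_zero_iff.2 fun j _ ↦ by positivity
  have hnum : (∏ j ∈ Finset.range (n + 1), ((m : ℝ) + 1 + j)) ≠ 0 :=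
    Finset.prod_ne_zero_iff.2 fun j _ ↦ by positivity
  rw [GammaSeq, GammaSeq, hprod, hsplit]
  field_simp

lemma tendsto_rpow_mul_risingRatio (hν0 : 0 < ν) (m : ℕ) :
    Tendsto (fun n : ℕ ↦ (n : ℝ) ^ ((1 - ν) * m) * risingRatio ν (n + 1) m) atTop
      (𝓝 (m.factorial / Gamma (ν * m + 1))) := by
  have h := (GammaSeq_tendsto_Gamma ((m : ℝ) + 1)).div (GammaSeq_tendsto_Gamma (ν * m + 1))
    (Gamma_pos_of_pos (by positivity)).ne'
  rw [Gamma_nat_eq_factorial] at h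
  refine h.congr' ?_
  filter_upwards [eventually_gt_atTop 0] with n hn
  exact GammaSeq_div_GammaSeq_eq hν0.le m hn

lemma rpow_mul_risingRatio_le (hν0 : 0 < ν) (hν1 : ν ≤ 1) (m : ℕ) {n : ℕ} (hn : 0 < n) :
    (n : ℝ) ^ ((1 - ν) * m) * risingRatio ν (n + 1) m ≤ m.factorial / Gamma (ν * m + 1) := by
  refine ge_of_tendsto (tendsto_rpow_mul_risingRatio hν0 m) ?_
  filter_upwards [eventually_ge_atTop n] with N hN
  induction N, hN using Nat.le_induction with
  | base => exact le_rfl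
  | succ N hnN ih => exact ih.trans (rpow_mul_risingRatio_le_succ hν0.le hν1 m (hn.trans_le hnN))

lemma tendsto_mlApprox_ML_one (hν0 : 0 < ν) (hν1 : ν ≤ 1) (y : ℝ) :
    Tendsto (fun n : ℕ ↦ mlApprox ν (n + 1) ((n : ℝ) ^ (1 - ν) * y)) atTop (𝓝 (ML ν 1 (-y))) := by
  have hterm : ∀ n m : ℕ, (-((n : ℝ) ^ (1 - ν) * y)) ^ m / m.factorial * risingRatio ν (n + 1) m
      = (-y) ^ m / m.factorial * ((n : ℝ) ^ ((1 - ν) * m) * risingRatio ν (n + 1) m) := by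
    intro n m
    rw [rpow_mul_natCast n.cast_nonneg, neg_mul_eq_mul_neg, mul_pow]
    ring
  simp_rw [mlApprox, hterm]
  refine tendsto_tsum_of_dominated_convergence
    (summable_pow_div_Gamma_mul_add hν0 hν1 one_pos (abs_nonneg y)) (fun m ↦ ?_) ?_
  · convert (tendsto_rpow_mul_risingRatio hν0 m).const_mul ((-y) ^ m / m.factorial) using 2
    field_simp
  · filter_upwards [eventually_gt_atTop 0] with n hn m
    rw [norm_mul, norm_div, norm_pow, norm_neg, Real.norm_natCast, Real.norm_eq_abs,
      Real.norm_of_nonneg (by have := risingRatio_nonneg hν0.le (n + 1) m; positivity)]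
    calc |y| ^ m / m.factorial * ((n : ℝ) ^ ((1 - ν) * m) * risingRatio ν (n + 1) m)
        ≤ |y| ^ m / m.factorial * (m.factorial / Gamma (ν * m + 1)) := by
          gcongr; exact rpow_mul_risingRatio_le hν0 hν1 m hn
      _ = |y| ^ m / Gamma (ν * m + 1) := by field_simp

lemma ML_one_neg_mem_Icc (hν0 : 0 < ν) (hν1 : ν ≤ 1) {y : ℝ} (hy : 0 ≤ y) :
    ML ν 1 (-y) ∈ Icc 0 1 :=
  isClosed_Icc.mem_of_tendsto (tendsto_mlApprox_ML_one hν0 hν1 y) <| Eventually.of_forall fun n ↦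
    (mapsTo_mlApprox_and_antitoneOn hν0.le hν1 (n + 1)).1
      (mem_Ici.2 (mul_nonneg (rpow_nonneg n.cast_nonneg _) hy))

lemma antitoneOn_ML_one_neg (hν0 : 0 < ν) (hν1 : ν ≤ 1) :
    AntitoneOn (fun y ↦ ML ν 1 (-y)) (Ici 0) := fun y hy y' hy' hyy' ↦
  le_of_tendsto_of_tendsto' (tendsto_mlApprox_ML_one hν0 hν1 y')
    (tendsto_mlApprox_ML_one hν0 hν1 y) fun n ↦
      (mapsTo_mlApprox_and_antitoneOn hν0.le hν1 (n + 1)).2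
        (mem_Ici.2 (mul_nonneg (rpow_nonneg n.cast_nonneg _) hy))
        (mem_Ici.2 (mul_nonneg (rpow_nonneg n.cast_nonneg _) hy'))
        (mul_le_mul_of_nonneg_left hyy' (rpow_nonneg n.cast_nonneg _))

end MittagLeffler

theorem stmt7 (lam ν t : ℝ) (hlam : 0 < lam) (hν0 : 0 < ν) (hν1 : ν ≤ 1) (ht : 0 < t) :
    (lam * t ^ ν / ν) * ∫ w in Set.Ioi (0:ℝ), Real.exp (-w) * ML ν ν (-w * lam * t ^ ν)
      = 1 - ∫ w in Set.Ioi (0:ℝ), Real.exp (-w) * ML ν 1 (-lam * t ^ ν * w) := by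
  have hc : 0 < lam * t ^ ν := mul_pos hlam (rpow_pos_of_pos ht ν)
  have hderiv : ∀ w : ℝ, HasDerivAt (fun w ↦ ML ν 1 (-lam * t ^ ν * w))
      (-(lam * t ^ ν / ν) * ML ν ν (-w * lam * t ^ ν)) w := fun w ↦ by
    refine ((hasDerivAt_ML_one hν0 hν1 _).comp w
      ((hasDerivAt_id' w).const_mul (-lam * t ^ ν))).congr_deriv ?_
    rw [show -lam * t ^ ν * w = -w * lam * t ^ ν by ring]
    ring
  have hanti : AntitoneOn (fun w ↦ ML ν 1 (-lam * t ^ ν * w)) (Ici 0) := fun w hw w' hw' h ↦ by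
    simpa [neg_mul] using antitoneOn_ML_one_neg hν0 hν1 (mul_nonneg hc.le hw)
      (mul_nonneg hc.le hw') (mul_le_mul_of_nonneg_left h hc.le)
  have hIBP := integral_exp_neg_mul_deriv_of_antitoneOn (fun w _ ↦ hderiv w) hanti
    fun w hw ↦ by simpa [neg_mul] using (ML_one_neg_mem_Icc hν0 hν1 (mul_nonneg hc.le hw)).1
  simp only [mul_left_comm (exp _), integral_const_mul, mul_zero, ML_zero, Gamma_one, inv_one]
    at hIBP
  linarith
end

section
/- Let λ ≠ μ, λ, μ > 0, ν ∈ (0,1], and set m₂(t) = (2λ/(λ-μ)) [E_{ν,1}(2(λ-μ)t^ν) - E_{ν,1}((λ-μ)t^ν)]. Then m₂ satisfies m₂(0) = 0 and its Laplace transform equals z ↦ 2λ z^{ν-1} / ((z^ν - (λ-μ))(z^ν - 2(λ-μ))) for z^ν > 2|λ-μ|. -/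
/-!
Expanding `E_{ν,1}(a t^ν) = ∑ aᵐ t^{νm} / Γ(νm+1)` and integrating termwise against `e^{-zt}`,
the Gamma integral turns the `m`-th term into `aᵐ z^{-(νm+1)}`, so the Laplace transform is the
geometric series `z^{ν-1} / (z^ν - a)` when `|a| < z^ν`. The integrals of the absolute values form
the same series with `|a|`, which justifies the interchange of sum and integral. `m₂` is a multiple
of the difference of two such functions, with `a = 2(λ-μ)` and `a = λ-μ`, and the claim follows by
partial fractions.
-/

open MeasureTheory Real Set Filter Nat Topology
open scoped ENNReal

lemma eventually_rpow_le_Gamma_add_one {R : ℝ} (hR : 1 ≤ R) :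
    ∀ᶠ s : ℝ in atTop, R ^ s ≤ Gamma (s + 1) := by
  have hfac : Tendsto (fun n : ℕ => R ^ (n + 1) / (n ! : ℝ)) atTop (𝓝 0) := by
    have := (FloorSemiring.tendsto_pow_div_factorial_atTop R).const_mul R
    rw [mul_zero] at this
    exact this.congr fun n => by ring
  filter_upwards [(hfac.comp tendsto_nat_floor_atTop).eventually_lt_const one_pos,
    eventually_ge_atTop 1] with s hs hs1
  set n := ⌊s⌋₊
  have hn1 : 1 ≤ n := Nat.le_floor (by exact_mod_cast hs1)
  have hfac_pos : (0 : ℝ) < n ! := by positivity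
  calc R ^ s ≤ R ^ ((n : ℝ) + 1) := rpow_le_rpow_of_exponent_le hR (Nat.lt_floor_add_one s).le
    _ = R ^ (n + 1) := by exact_mod_cast rpow_natCast R (n + 1)
    _ ≤ n ! := ((div_lt_one hfac_pos).mp hs).le
    _ = Gamma ((n : ℝ) + 1) := (Gamma_nat_eq_factorial n).symm
    _ ≤ Gamma (s + 1) := by
      have hn : (1 : ℝ) ≤ n := by exact_mod_cast hn1
      have hns : (n : ℝ) ≤ s := Nat.floor_le (by linarith)
      exact Gamma_strictMonoOn_Ici.monotoneOn (by simp only [mem_Ici]; linarith)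
        (by simp only [mem_Ici]; linarith) (by linarith)

lemma summable_pow_div_Gamma {ν : ℝ} (hν : 0 < ν) (x : ℝ) :
    Summable fun m : ℕ => x ^ m / Gamma (ν * m + 1) := by
  have hbase : 1 ≤ 2 * |x| + 1 := by linarith [abs_nonneg x]
  set R := (2 * |x| + 1) ^ ν⁻¹
  have hR : 1 ≤ R := one_le_rpow hbase (inv_nonneg.mpr hν.le)
  have hνm : Tendsto (fun m : ℕ => ν * m) atTop atTop :=
    tendsto_natCast_atTop_atTop.const_mul_atTop hν
  refine Summable.of_norm_bounded_eventually_nat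
    (summable_geometric_of_lt_one (by norm_num : (0 : ℝ) ≤ 1 / 2) (by norm_num)) ?_
  filter_upwards [hνm.eventually (eventually_rpow_le_Gamma_add_one hR)] with m hm
  have hRm : R ^ (ν * m) = (2 * |x| + 1) ^ m := by
    rw [← rpow_mul (by linarith), inv_mul_cancel_left₀ hν.ne', rpow_natCast]
  rw [hRm] at hm
  have hpos : (0 : ℝ) < (2 * |x| + 1) ^ m := by positivity
  rw [norm_div, norm_pow, norm_of_nonneg (hpos.trans_le hm).le, Real.norm_eq_abs]
  calc |x| ^ m / Gamma (ν * m + 1) ≤ |x| ^ m / (2 * |x| + 1) ^ m := by gcongr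
    _ = (|x| / (2 * |x| + 1)) ^ m := (div_pow _ _ _).symm
    _ ≤ (1 / 2) ^ m := by
      refine pow_le_pow_left₀ (by positivity) ?_ m
      rw [div_le_div_iff₀ (by linarith) two_pos]
      linarith [abs_nonneg x]

theorem integrable_tsum_of_summable_integral_norm {α E ι : Type*} [MeasurableSpace α]
    {μ : Measure α} [NormedAddCommGroup E] [CompleteSpace E] [Countable ι] {F : ι → α → E}
    (hF_int : ∀ i, Integrable (F i) μ) (hF_sum : Summable fun i ↦ ∫ a, ‖F i a‖ ∂μ) :
    Integrable (fun a ↦ ∑' i, F i a) μ := by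
  have hlint : ∀ i, ∫⁻ a, ‖F i a‖ₑ ∂μ = ENNReal.ofReal (∫ a, ‖F i a‖ ∂μ) := fun i ↦
    (ofReal_integral_norm_eq_lintegral_enorm (hF_int i)).symm
  have hfin : ∫⁻ a, ∑' i, ‖F i a‖ₑ ∂μ ≠ ∞ := by
    rw [lintegral_tsum fun i ↦ (hF_int i).1.enorm, funext hlint]
    exact ENNReal.ofReal_tsum_of_nonneg (fun i ↦ integral_nonneg fun _ ↦ norm_nonneg _)
      hF_sum ▸ ENNReal.ofReal_ne_top
  have hsum : ∀ᵐ a ∂μ, Summable fun i ↦ F i a := by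
    filter_upwards [ae_lt_top' (AEMeasurable.tsum fun i ↦ (hF_int i).1.enorm) hfin] with a ha
    refine Summable.of_norm ?_
    simpa [enorm_eq_nnnorm, ENNReal.tsum_coe_ne_top_iff_summable, ← NNReal.summable_coe]
      using ha.ne
  refine ⟨aestronglyMeasurable_of_tendsto_ae atTop
    (fun s ↦ Finset.aestronglyMeasurable_fun_sum s fun i _ ↦ (hF_int i).1)
    (hsum.mono fun a ha ↦ ha.hasSum), ?_⟩
  exact lt_of_le_of_lt (lintegral_mono fun a ↦ enorm_tsum_le_tsum_enorm) hfin.lt_top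

lemma hasSum_ML_mul_rpow {ν : ℝ} (hν : 0 < ν) (a : ℝ) {t : ℝ} (ht : 0 ≤ t) :
    HasSum (fun m : ℕ => a ^ m * (t ^ (ν * m) / Gamma (ν * m + 1))) (ML ν 1 (a * t ^ ν)) := by
  have hterm (m : ℕ) : (a * t ^ ν) ^ m / Gamma (ν * m + 1)
      = a ^ m * (t ^ (ν * m) / Gamma (ν * m + 1)) := by
    rw [mul_pow, ← rpow_natCast (t ^ ν), ← rpow_mul ht, mul_div_assoc]
  rw [ML]
  simpa only [hterm] using (summable_pow_div_Gamma hν (a * t ^ ν)).hasSum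

lemma integral_exp_mul_rpow_div_Gamma {z s : ℝ} (hz : 0 < z) (hs : 0 ≤ s) :
    ∫ t in Ioi 0, exp (-z * t) * (t ^ s / Gamma (s + 1)) = (1 / z) ^ (s + 1) := by
  have hΓ : Gamma (s + 1) ≠ 0 := (Gamma_pos_of_pos (by linarith)).ne'
  simp_rw [mul_div_assoc', integral_div, mul_comm (exp _), neg_mul]
  rw [← add_sub_cancel_right s 1, integral_rpow_mul_exp_neg_mul_Ioi (by linarith) hz,
    add_sub_cancel_right, mul_div_cancel_right₀ _ hΓ]

lemma integrableOn_exp_mul_rpow_div_Gamma {z s : ℝ} (hz : 0 < z) (hs : 0 ≤ s) :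
    IntegrableOn (fun t ↦ exp (-z * t) * (t ^ s / Gamma (s + 1))) (Ioi 0) :=
  Integrable.of_integral_ne_zero <| by
    rw [integral_exp_mul_rpow_div_Gamma hz hs]; positivity

lemma hasSum_geometric_rpow {ν z a : ℝ} (hz : 0 < z) (ha : |a| < z ^ ν) :
    HasSum (fun m : ℕ => a ^ m * (1 / z) ^ (ν * m + 1)) (z ^ (ν - 1) / (z ^ ν - a)) := by
  have hzν : 0 < z ^ ν := rpow_pos_of_pos hz ν
  have hr : ‖a / z ^ ν‖ < 1 := by
    rwa [norm_div, Real.norm_eq_abs, norm_of_nonneg hzν.le, div_lt_one hzν]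
  have hterm (m : ℕ) : a ^ m * (1 / z) ^ (ν * m + 1) = (a / z ^ ν) ^ m * z⁻¹ := by
    rw [rpow_add (by positivity), rpow_one, rpow_mul (by positivity), rpow_natCast, one_div,
      inv_rpow hz.le, div_pow, div_eq_mul_inv _ ((z ^ ν) ^ m), inv_pow, mul_assoc]
  have hsum : (1 - a / z ^ ν)⁻¹ * z⁻¹ = z ^ (ν - 1) / (z ^ ν - a) := by
    have : z ^ ν - a ≠ 0 := by linarith [le_abs_self a]
    rw [rpow_sub_one hz.ne']
    field_simp
  simpa only [hterm, hsum] using (hasSum_geometric_of_norm_lt_one hr).mul_right z⁻¹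

lemma integrableOn_and_integral_exp_mul_ML {ν z a : ℝ} (hν : 0 < ν) (hz : 0 < z)
    (ha : |a| < z ^ ν) :
    IntegrableOn (fun t ↦ exp (-z * t) * ML ν 1 (a * t ^ ν)) (Ioi 0) ∧
      ∫ t in Ioi 0, exp (-z * t) * ML ν 1 (a * t ^ ν) = z ^ (ν - 1) / (z ^ ν - a) := by
  set F : ℕ → ℝ → ℝ := fun m t ↦ a ^ m * (exp (-z * t) * (t ^ (ν * m) / Gamma (ν * m + 1)))
  have hF_int (m : ℕ) : IntegrableOn (F m) (Ioi 0) :=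
    (integrableOn_exp_mul_rpow_div_Gamma hz (by positivity)).const_mul _
  have hF_integral (m : ℕ) : ∫ t in Ioi 0, F m t = a ^ m * (1 / z) ^ (ν * m + 1) := by
    rw [integral_const_mul, integral_exp_mul_rpow_div_Gamma hz (by positivity)]
  have hF_norm (m : ℕ) : ∫ t in Ioi 0, ‖F m t‖ = |a| ^ m * (1 / z) ^ (ν * m + 1) := by
    rw [← integral_exp_mul_rpow_div_Gamma hz (by positivity), ← integral_const_mul]
    refine setIntegral_congr_fun measurableSet_Ioi fun t ht ↦ ?_
    have : 0 ≤ t ^ (ν * m) := rpow_nonneg (le_of_lt ht) _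
    rw [norm_mul, norm_pow, Real.norm_eq_abs,
      norm_of_nonneg (by have := Gamma_pos_of_pos (by positivity : 0 < ν * m + 1); positivity)]
  have hF_sum : Summable fun m ↦ ∫ t in Ioi 0, ‖F m t‖ := by
    simpa only [hF_norm] using (hasSum_geometric_rpow hz (by rwa [abs_abs])).summable
  have hML (t : ℝ) (ht : t ∈ Ioi 0) : exp (-z * t) * ML ν 1 (a * t ^ ν) = ∑' m, F m t := by
    simp only [F, mul_left_comm _ (exp _)]
    exact ((hasSum_ML_mul_rpow hν a (le_of_lt ht)).mul_left _).tsum_eq.symm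
  constructor
  · refine (integrable_tsum_of_summable_integral_norm hF_int hF_sum).congr ?_
    filter_upwards [ae_restrict_mem measurableSet_Ioi] with t ht using (hML t ht).symm
  · rw [setIntegral_congr_fun measurableSet_Ioi hML,
      ← integral_tsum_of_summable_integral_norm hF_int hF_sum]
    simpa only [hF_integral] using (hasSum_geometric_rpow hz ha).tsum_eq

theorem stmt14_general (lam mu ν : ℝ) (hne : lam ≠ mu)
    (hν0 : 0 < ν) :
    (fun t : ℝ => (2 * lam / (lam - mu)) *
        (ML ν 1 (2 * (lam - mu) * t ^ ν) - ML ν 1 ((lam - mu) * t ^ ν))) 0 = 0 ∧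
    ∀ z : ℝ, 0 < z → 2 * |lam - mu| < z ^ ν →
      ∫ t in Set.Ioi (0:ℝ), Real.exp (-z * t) *
          ((2 * lam / (lam - mu)) *
            (ML ν 1 (2 * (lam - mu) * t ^ ν) - ML ν 1 ((lam - mu) * t ^ ν)))
        = 2 * lam * z ^ (ν - 1) / ((z ^ ν - (lam - mu)) * (z ^ ν - 2 * (lam - mu))) := by
  refine ⟨by simp [zero_rpow hν0.ne'], fun z hz hzν ↦ ?_⟩
  set d := lam - mu
  have hd : d ≠ 0 := sub_ne_zero.mpr hne
  obtain ⟨hint₁, hval₁⟩ :=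
    integrableOn_and_integral_exp_mul_ML hν0 hz (by linarith [abs_nonneg d] : |d| < z ^ ν)
  obtain ⟨hint₂, hval₂⟩ :=
    integrableOn_and_integral_exp_mul_ML hν0 hz (by rwa [abs_mul, abs_two] : |2 * d| < z ^ ν)
  have hne₁ : z ^ ν - d ≠ 0 := by linarith [le_abs_self d, abs_nonneg d]
  have hne₂ : z ^ ν - 2 * d ≠ 0 := by linarith [le_abs_self d]
  calc _ = 2 * lam / d * ((∫ t in Ioi 0, exp (-z * t) * ML ν 1 (2 * d * t ^ ν))
        - ∫ t in Ioi 0, exp (-z * t) * ML ν 1 (d * t ^ ν)) := by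
        rw [← integral_sub hint₂ hint₁, ← integral_const_mul]
        simp only [mul_sub, mul_left_comm]
    _ = _ := by
        rw [hval₁, hval₂]
        field_simp
        ring

theorem stmt14 (lam mu ν : ℝ) (hlam : 0 < lam) (hmu : 0 < mu) (hne : lam ≠ mu)
    (hν0 : 0 < ν) (hν1 : ν ≤ 1) :
    (fun t : ℝ => (2 * lam / (lam - mu)) *
        (ML ν 1 (2 * (lam - mu) * t ^ ν) - ML ν 1 ((lam - mu) * t ^ ν))) 0 = 0 ∧
    ∀ z : ℝ, 0 < z → 2 * |lam - mu| < z ^ ν →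
      ∫ t in Set.Ioi (0:ℝ), Real.exp (-z * t) *
          ((2 * lam / (lam - mu)) *
            (ML ν 1 (2 * (lam - mu) * t ^ ν) - ML ν 1 ((lam - mu) * t ^ ν)))
        = 2 * lam * z ^ (ν - 1) / ((z ^ ν - (lam - mu)) * (z ^ ν - 2 * (lam - mu))) :=
  stmt14_general lam mu ν hne hν0
end
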